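/- arXiv:2308.13771 — 3 statements merged into one kernel-verified Lean document; each statement's English description precedes it below -/
import Mathlib

section
/- Let A and B be unital C*-algebras and let φ : A → B be a completely positive map. If (X₁, σ₁, e₁) and (X₂, σ₂, e₂) are two Paschke dilations of φ, then there exists a Hilbert B-module isomorphism (a unitary adjointable map) W : X₁ → X₂ such that W e₁ = e₂ and W σ₁(a) W* = σ₂(a) for all a ∈ A. -/
/-!
STATEMENT 1: Uniqueness of the Paschke dilation.  If `(X₁, σ₁, e₁)` and `(X₂, σ₂, e₂)`
are two Paschke dilations of a completely positive map `φ : A → B`, then there is a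
Hilbert `B`-module isomorphism `W : X₁ → X₂` with `W e₁ = e₂` and `W σ₁(a) W* = σ₂(a)`
for all `a ∈ A`.
-/

open scoped ComplexOrder

noncomputable section

/-- A map `φ : A → B` between unital C*-algebras is completely positive:
it is linear and `∑ i j, bᵢ* φ(aᵢ* aⱼ) bⱼ` is positive for all finite families;
positivity in `B` is expressed by being of the form `b* b`. -/
def IsCPMapCStar (A : Type) [Ring A] [StarRing A] [Algebra ℂ A]
    (B : Type) [CStarAlgebra B] (φ : A → B) : Prop :=
  (∀ x y, φ (x + y) = φ x + φ y) ∧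
  (∀ (c : ℂ) (x : A), φ (c • x) = c • φ x) ∧
  ∀ (n : ℕ) (a : Fin n → A) (b : Fin n → B),
    ∃ c : B, ∑ i, ∑ j, star (b i) * φ (star (a i) * a j) * b j = star c * c

/-- The data and axioms of a Hilbert `B`-module structure on `X`: a right `B`-module
with a `B`-valued inner product satisfying Paschke's axioms, complete in the norm
`‖x‖ = ‖⟨x,x⟩‖^{1/2}` (the norm of `X` agrees with this norm). -/
structure HilbertModuleStruct (B : Type) [CStarAlgebra B]
    (X : Type) [NormedAddCommGroup X] [Module ℂ X] [CompleteSpace X] : Type where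
  /-- the `B`-valued inner product -/
  inner : X → X → B
  /-- the right action of `B` on `X` -/
  smulR : X → B → X
  inner_add_left : ∀ x y z, inner (x + y) z = inner x z + inner y z
  inner_smulC_left : ∀ (c : ℂ) (x y : X), inner (c • x) y = c • inner x y
  inner_star : ∀ x y, inner x y = star (inner y x)
  inner_smulR_left : ∀ x y b, inner (smulR x b) y = inner x y * b
  /-- `⟨x, x⟩ ≥ 0`, expressed by `⟨x, x⟩` being of the form `b* b` -/
  inner_self_pos : ∀ x, ∃ b : B, inner x x = star b * b
  inner_self_eq_zero : ∀ x, inner x x = 0 → x = 0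
  smulR_add : ∀ x b₁ b₂, smulR x (b₁ + b₂) = smulR x b₁ + smulR x b₂
  add_smulR : ∀ x y b, smulR (x + y) b = smulR x b + smulR y b
  smulR_mul : ∀ x b₁ b₂, smulR (smulR x b₁) b₂ = smulR x (b₁ * b₂)
  smulR_one : ∀ x, smulR x 1 = x
  smulC_smulR : ∀ (c : ℂ) x b, smulR (c • x) b = c • smulR x b
  smulR_smulC : ∀ (c : ℂ) x b, smulR x (c • b) = c • smulR x b
  norm_eq : ∀ x, ‖x‖ = Real.sqrt ‖inner x x‖

/-- `(X, σ, e)` (with Hilbert module structure `M` on `X`) is a Paschke dilation of the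
completely positive map `φ : A → B`:  `σ` is a unital `*`-representation of `A` by
adjointable operators on `X`, `φ(a) = ⟨σ(a) e, e⟩`, and `{σ(a)(e·b)}` is total in `X`. -/
def IsPaschkeDilation {A : Type} [Ring A] [StarRing A] [Algebra ℂ A]
    {B : Type} [CStarAlgebra B]
    {X : Type} [NormedAddCommGroup X] [Module ℂ X] [CompleteSpace X]
    (M : HilbertModuleStruct B X) (φ : A → B) (σ : A → X → X) (e : X) : Prop :=
  (∀ a : A, Continuous (σ a)) ∧
  (∀ (a : A) (x y : X), σ a (x + y) = σ a x + σ a y) ∧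
  (∀ (a : A) (c : ℂ) (x : X), σ a (c • x) = c • σ a x) ∧
  (∀ (a : A) (x : X) (b : B), σ a (M.smulR x b) = M.smulR (σ a x) b) ∧
  (∀ (a₁ a₂ : A) (x : X), σ (a₁ + a₂) x = σ a₁ x + σ a₂ x) ∧
  (∀ (c : ℂ) (a : A) (x : X), σ (c • a) x = c • σ a x) ∧
  (∀ (a₁ a₂ : A) (x : X), σ (a₁ * a₂) x = σ a₁ (σ a₂ x)) ∧
  (∀ x : X, σ 1 x = x) ∧
  (∀ (a : A) (x y : X), M.inner (σ a x) y = M.inner x (σ (star a) y)) ∧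
  (∀ a : A, φ a = M.inner (σ a e) e) ∧
  Dense (↑(Submodule.span ℂ {x : X | ∃ (a : A) (b : B), σ a (M.smulR e b) = x}) : Set X)

/-!
The closed span of the pairs `(σ₁(a)(e₁·b), σ₂(a)(e₂·b))` in `X₁ × X₂` is the graph of the
unitary. Its two coordinates have the same inner products, because
`⟨σ(a)(e·b), σ(a')(e·b')⟩ = b'* φ(a'* a) b` only depends on `φ`; so both coordinate projections
are isometries of this closed subspace, with dense and hence full ranges. The graph is stable
under `(σ₁(a), σ₂(a))` and under right multiplication by `b`, which gives the intertwining
properties.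
-/

namespace HilbertModuleStruct

variable {B : Type} [CStarAlgebra B] {X : Type} [NormedAddCommGroup X] [Module ℂ X]
  [CompleteSpace X] (M : HilbertModuleStruct B X)

lemma inner_add_right (x y z : X) : M.inner x (y + z) = M.inner x y + M.inner x z := by
  rw [M.inner_star, M.inner_add_left, star_add, ← M.inner_star, ← M.inner_star]

lemma inner_smulC_right (c : ℂ) (x y : X) :
    M.inner x (c • y) = starRingEnd ℂ c • M.inner x y := by
  rw [M.inner_star, M.inner_smulC_left, star_smul, ← M.inner_star]
  rfl

lemma inner_smulR_right (x y : X) (b : B) :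
    M.inner x (M.smulR y b) = star b * M.inner x y := by
  rw [M.inner_star, M.inner_smulR_left, star_mul, ← M.inner_star]

def innerₛₗ : X →ₗ[ℂ] X →ₗ⋆[ℂ] B :=
  LinearMap.mk₂'ₛₗ (RingHom.id ℂ) (starRingEnd ℂ) M.inner M.inner_add_left
    M.inner_smulC_left M.inner_add_right M.inner_smulC_right

@[simp]
lemma innerₛₗ_apply (x y : X) : M.innerₛₗ x y = M.inner x y := rfl

lemma norm_sq (x : X) : ‖M.inner x x‖ = ‖x‖ ^ 2 := by
  rw [M.norm_eq, Real.sq_sqrt (norm_nonneg _)]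

/-- `X` with conjugated complex scalars and the left action `b • x := x·b*`: on it `M.inner` is a
`CStarModule` inner product in Mathlib's convention (linear in the second variable, with the
algebra acting on the left), which gives access to Mathlib's Cauchy–Schwarz inequality. -/
def Conj (_M : HilbertModuleStruct B X) : Type := X

instance : NormedAddCommGroup M.Conj := inferInstanceAs (NormedAddCommGroup X)
instance : Module ℂ M.Conj := Module.compHom X (starRingEnd ℂ)
instance : SMul B M.Conj := ⟨fun b x => M.smulR x (star b)⟩

instance [PartialOrder B] [StarOrderedRing B] : CStarModule B M.Conj where
  inner x y := M.inner x y
  inner_add_right := M.inner_add_right _ _ _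
  inner_self_nonneg {x} := by
    obtain ⟨b, hb⟩ := M.inner_self_pos x
    exact hb ▸ star_mul_self_nonneg b
  inner_self {x} := ⟨M.inner_self_eq_zero x, fun h => h ▸ LinearMap.map_zero₂ M.innerₛₗ 0⟩
  inner_op_smul_right {b x y} := (M.inner_smulR_right x y (star b)).trans (by rw [star_star])
  inner_smul_right_complex {c x y} :=
    (M.inner_smulC_right (starRingEnd ℂ c) x y).trans (by rw [Complex.conj_conj])
  star_inner x y := (M.inner_star y x).symm
  norm_eq_sqrt_norm_inner_self x := M.norm_eq x

abbrev toNormedSpace : NormedSpace ℂ X where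
  norm_smul_le c x := by
    let _ := CStarAlgebra.spectralOrder B
    have _ := CStarAlgebra.spectralOrderedRing B
    have h := (CStarModule.normedSpaceCore B (E := M.Conj)).norm_smul (starRingEnd ℂ c) x
    rw [RCLike.norm_conj] at h
    refine (Eq.trans ?_ h).le
    -- `conj c` acts on `M.Conj` as `c` acts on `X`
    change ‖c • x‖ = ‖starRingEnd ℂ (starRingEnd ℂ c) • x‖
    rw [Complex.conj_conj]

lemma continuous_inner : Continuous fun p : X × X => M.inner p.1 p.2 := by
  let _ := CStarAlgebra.spectralOrder B
  have _ := CStarAlgebra.spectralOrderedRing B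
  let _ : NormedSpace ℂ M.Conj := .ofCore (CStarModule.normedSpaceCore B)
  exact CStarModule.continuous_inner (A := B) (E := M.Conj)

lemma norm_smulR_le (x : X) (b : B) : ‖M.smulR x b‖ ≤ ‖b‖ * ‖x‖ := by
  have h : ‖M.smulR x b‖ ^ 2 ≤ (‖b‖ * ‖x‖) ^ 2 := calc
    ‖M.smulR x b‖ ^ 2 = ‖star b * M.inner x x * b‖ := by
      rw [← M.norm_sq, M.inner_smulR_left, M.inner_smulR_right, mul_assoc]
    _ ≤ ‖star b‖ * ‖M.inner x x‖ * ‖b‖ := norm_mul₃_le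
    _ = (‖b‖ * ‖x‖) ^ 2 := by rw [norm_star, M.norm_sq]; ring
  exact (pow_le_pow_iff_left₀ (norm_nonneg _) (by positivity) two_ne_zero).mp h

def smulRₗ (b : B) : X →ₗ[ℂ] X where
  toFun x := M.smulR x b
  map_add' x y := M.add_smulR x y b
  map_smul' c x := M.smulC_smulR c x b

lemma continuous_smulRₗ (b : B) : Continuous (M.smulRₗ b) :=
  AddMonoidHomClass.continuous_of_bound (M.smulRₗ b) ‖b‖ (M.norm_smulR_le · b)

end HilbertModuleStruct

lemma Isometry.surjective_of_denseRange {α β : Type*} [EMetricSpace α] [CompleteSpace α]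
    [EMetricSpace β] {f : α → β} (hf : Isometry f) (hd : DenseRange f) :
    Function.Surjective f := by
  rw [← Set.range_eq_univ, ← hd.closure_range, hf.isClosedEmbedding.isClosed_range.closure_eq]

theorem Submodule.exists_linearEquiv_eq_graph {R E F : Type*} [Ring R]
    [NormedAddCommGroup E] [Module R E] [CompleteSpace E]
    [NormedAddCommGroup F] [Module R F] [CompleteSpace F]
    (G : Submodule R (E × F)) (hG : IsClosed (G : Set (E × F)))
    (hnorm : ∀ p ∈ G, ‖p.1‖ = ‖p.2‖)
    (hfst : Dense (G.map (LinearMap.fst R E F) : Set E))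
    (hsnd : Dense (G.map (LinearMap.snd R E F) : Set F)) :
    ∃ W : E ≃ₗ[R] F, G = W.toLinearMap.graph := by
  have : CompleteSpace G := hG.completeSpace_coe
  set j₁ : G →ₗ[R] E := (LinearMap.fst R E F).comp G.subtype
  set j₂ : G →ₗ[R] F := (LinearMap.snd R E F).comp G.subtype
  have iso₁ : Isometry j₁ := AddMonoidHomClass.isometry_of_norm j₁ fun p => by
    simp [j₁, Submodule.coe_norm, Prod.norm_def, hnorm p p.2]
  have iso₂ : Isometry j₂ := AddMonoidHomClass.isometry_of_norm j₂ fun p => by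
    simp [j₂, Submodule.coe_norm, Prod.norm_def, hnorm p p.2]
  have surj₁ : Function.Surjective j₁ := iso₁.surjective_of_denseRange <| by
    simpa [DenseRange, j₁, Set.range_comp] using hfst
  have surj₂ : Function.Surjective j₂ := iso₂.surjective_of_denseRange <| by
    simpa [DenseRange, j₂, Set.range_comp] using hsnd
  set E₁ := LinearEquiv.ofBijective j₁ ⟨iso₁.injective, surj₁⟩
  set E₂ := LinearEquiv.ofBijective j₂ ⟨iso₂.injective, surj₂⟩
  refine ⟨E₁.symm.trans E₂, Submodule.ext fun p => ?_⟩
  rw [LinearMap.mem_graph_iff]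
  constructor
  · intro hp
    have : E₁.symm p.1 = ⟨p, hp⟩ := E₁.symm_apply_eq.mpr rfl
    change p.2 = E₂ (E₁.symm p.1)
    rw [this]
    rfl
  · intro h
    have : (E₁.symm p.1 : E × F) = p := Prod.ext (E₁.apply_symm_apply p.1) h.symm
    exact this ▸ (E₁.symm p.1).2

lemma Submodule.mapsTo_closure_span {R E : Type*} [Semiring R] [AddCommMonoid E] [Module R E]
    [TopologicalSpace E] {S : Set E} (f : E →ₗ[R] E) (hf : Continuous f)
    (hS : Set.MapsTo f S (Submodule.span R S)) :
    Set.MapsTo f (closure (Submodule.span R S)) (closure (Submodule.span R S)) :=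
  Set.MapsTo.closure (fun _ hx => Submodule.span_le (p := (Submodule.span R S).comap f)
    |>.mpr hS hx) hf

namespace IsPaschkeDilation

variable {A : Type} [Ring A] [StarRing A] [Algebra ℂ A] {B : Type} [CStarAlgebra B]
  {X : Type} [NormedAddCommGroup X] [Module ℂ X] [CompleteSpace X]
  {M : HilbertModuleStruct B X} {φ : A → B} {σ : A → X → X} {e : X}

def repₗ (h : IsPaschkeDilation M φ σ e) (a : A) : X →ₗ[ℂ] X where
  toFun := σ a
  map_add' := h.2.1 a
  map_smul' := h.2.2.1 a

lemma inner_rep_smulR (h : IsPaschkeDilation M φ σ e) (a a' : A) (b b' : B) :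
    M.inner (σ a (M.smulR e b)) (σ a' (M.smulR e b')) = star b' * φ (star a' * a) * b := by
  obtain ⟨-, -, -, hsmulR, -, -, hmul, -, hadj, hφ, -⟩ := h
  calc M.inner (σ a (M.smulR e b)) (σ a' (M.smulR e b'))
      = M.inner (σ (star a' * a) (M.smulR e b)) (M.smulR e b') := by
        rw [hmul, hadj (star a'), star_star]
    _ = star b' * φ (star a' * a) * b := by
        rw [hsmulR, M.inner_smulR_left, M.inner_smulR_right, hφ]

lemma smulR_rep_smulR (h : IsPaschkeDilation M φ σ e) (a : A) (b b' : B) :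
    M.smulR (σ a (M.smulR e b)) b' = σ a (M.smulR e (b * b')) := by
  obtain ⟨-, -, -, hsmulR, -⟩ := h
  rw [← hsmulR, M.smulR_mul]

lemma rep_rep (h : IsPaschkeDilation M φ σ e) (a a' : A) (x : X) :
    σ a (σ a' x) = σ (a * a') x := by
  obtain ⟨-, -, -, -, -, -, hmul, -⟩ := h
  exact (hmul a a' x).symm

lemma rep_one_smulR_one (h : IsPaschkeDilation M φ σ e) : σ 1 (M.smulR e 1) = e := by
  obtain ⟨-, -, -, -, -, -, -, hone, -⟩ := h
  rw [M.smulR_one, hone]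

end IsPaschkeDilation

section DilationPairs

variable {A : Type} [Ring A] [StarRing A] [Algebra ℂ A] {B : Type} [CStarAlgebra B]
  {X₁ : Type} [NormedAddCommGroup X₁] [Module ℂ X₁] [CompleteSpace X₁]
  {X₂ : Type} [NormedAddCommGroup X₂] [Module ℂ X₂] [CompleteSpace X₂]
  {φ : A → B} {M₁ : HilbertModuleStruct B X₁} {σ₁ : A → X₁ → X₁} {e₁ : X₁}
  {M₂ : HilbertModuleStruct B X₂} {σ₂ : A → X₂ → X₂} {e₂ : X₂}

def dilationPairs (M₁ : HilbertModuleStruct B X₁) (σ₁ : A → X₁ → X₁) (e₁ : X₁)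
    (M₂ : HilbertModuleStruct B X₂) (σ₂ : A → X₂ → X₂) (e₂ : X₂) : Set (X₁ × X₂) :=
  Set.range fun ab : A × B => (σ₁ ab.1 (M₁.smulR e₁ ab.2), σ₂ ab.1 (M₂.smulR e₂ ab.2))

lemma dense_map_fst_span_dilationPairs (h₁ : IsPaschkeDilation M₁ φ σ₁ e₁) :
    Dense ((Submodule.span ℂ (dilationPairs M₁ σ₁ e₁ M₂ σ₂ e₂)).map
      (LinearMap.fst ℂ X₁ X₂) : Set X₁) := by
  have himage : Prod.fst '' dilationPairs M₁ σ₁ e₁ M₂ σ₂ e₂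
      = {x | ∃ (a : A) (b : B), σ₁ a (M₁.smulR e₁ b) = x} := by
    ext x
    simp [dilationPairs]
  obtain ⟨-, -, -, -, -, -, -, -, -, -, hdense⟩ := h₁
  rwa [Submodule.map_span, LinearMap.coe_fst, himage]

lemma dense_map_snd_span_dilationPairs (h₂ : IsPaschkeDilation M₂ φ σ₂ e₂) :
    Dense ((Submodule.span ℂ (dilationPairs M₁ σ₁ e₁ M₂ σ₂ e₂)).map
      (LinearMap.snd ℂ X₁ X₂) : Set X₂) := by
  have himage : Prod.snd '' dilationPairs M₁ σ₁ e₁ M₂ σ₂ e₂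
      = {x | ∃ (a : A) (b : B), σ₂ a (M₂.smulR e₂ b) = x} := by
    ext x
    simp [dilationPairs]
  obtain ⟨-, -, -, -, -, -, -, -, -, -, hdense⟩ := h₂
  rwa [Submodule.map_span, LinearMap.coe_snd, himage]

variable (h₁ : IsPaschkeDilation M₁ φ σ₁ e₁) (h₂ : IsPaschkeDilation M₂ φ σ₂ e₂)
include h₁ h₂

lemma inner_fst_eq_inner_snd_of_mem_closure {p q : X₁ × X₂}
    (hp : p ∈ closure (Submodule.span ℂ (dilationPairs M₁ σ₁ e₁ M₂ σ₂ e₂) : Set (X₁ × X₂)))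
    (hq : q ∈ closure (Submodule.span ℂ (dilationPairs M₁ σ₁ e₁ M₂ σ₂ e₂) : Set (X₁ × X₂))) :
    M₁.inner p.1 q.1 = M₂.inner p.2 q.2 := by
  have hspan : ∀ p ∈ Submodule.span ℂ (dilationPairs M₁ σ₁ e₁ M₂ σ₂ e₂),
      ∀ q ∈ Submodule.span ℂ (dilationPairs M₁ σ₁ e₁ M₂ σ₂ e₂),
      M₁.inner p.1 q.1 = M₂.inner p.2 q.2 := by
    intro p hp q hq
    induction hp, hq using Submodule.span_induction₂ with
    | mem_mem p q hp hq =>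
      obtain ⟨⟨a, b⟩, rfl⟩ := hp
      obtain ⟨⟨a', b'⟩, rfl⟩ := hq
      simp only [h₁.inner_rep_smulR, h₂.inner_rep_smulR]
    | _ => simp_all [← HilbertModuleStruct.innerₛₗ_apply]
  have hcont₁ : Continuous fun r : (X₁ × X₂) × (X₁ × X₂) => M₁.inner r.1.1 r.2.1 :=
    M₁.continuous_inner.comp (continuous_fst.fst.prodMk continuous_snd.fst)
  have hcont₂ : Continuous fun r : (X₁ × X₂) × (X₁ × X₂) => M₂.inner r.1.2 r.2.2 :=
    M₂.continuous_inner.comp (continuous_fst.snd.prodMk continuous_snd.snd)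
  set V : Set (X₁ × X₂) := ↑(Submodule.span ℂ (dilationPairs M₁ σ₁ e₁ M₂ σ₂ e₂))
  have hmem : (p, q) ∈ closure (V ×ˢ V) := by
    rw [closure_prod_eq]
    exact ⟨hp, hq⟩
  exact Set.EqOn.closure (fun r hr => hspan _ hr.1 _ hr.2) hcont₁ hcont₂ hmem

lemma base_mem_dilationPairs : (e₁, e₂) ∈ dilationPairs M₁ σ₁ e₁ M₂ σ₂ e₂ :=
  ⟨(1, 1), by simp only [h₁.rep_one_smulR_one, h₂.rep_one_smulR_one]⟩

lemma mapsTo_smulR_closure_span_dilationPairs (b : B) :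
    Set.MapsTo ((M₁.smulRₗ b).prodMap (M₂.smulRₗ b))
      (closure (Submodule.span ℂ (dilationPairs M₁ σ₁ e₁ M₂ σ₂ e₂)))
      (closure (Submodule.span ℂ (dilationPairs M₁ σ₁ e₁ M₂ σ₂ e₂))) := by
  refine Submodule.mapsTo_closure_span _
    ((M₁.continuous_smulRₗ b).prodMap (M₂.continuous_smulRₗ b)) ?_
  rintro _ ⟨⟨a, b'⟩, rfl⟩
  refine Submodule.subset_span ⟨(a, b' * b), ?_⟩
  simp [HilbertModuleStruct.smulRₗ, h₁.smulR_rep_smulR, h₂.smulR_rep_smulR]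

lemma mapsTo_rep_closure_span_dilationPairs (a : A) :
    Set.MapsTo ((h₁.repₗ a).prodMap (h₂.repₗ a))
      (closure (Submodule.span ℂ (dilationPairs M₁ σ₁ e₁ M₂ σ₂ e₂)))
      (closure (Submodule.span ℂ (dilationPairs M₁ σ₁ e₁ M₂ σ₂ e₂))) := by
  refine Submodule.mapsTo_closure_span _ ((h₁.1 a).prodMap (h₂.1 a)) ?_
  rintro _ ⟨⟨a', b⟩, rfl⟩
  refine Submodule.subset_span ⟨(a * a', b), ?_⟩
  simp [IsPaschkeDilation.repₗ, h₁.rep_rep, h₂.rep_rep]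

end DilationPairs

theorem paschke_dilation_unique_general
    (A : Type) [CStarAlgebra A] (B : Type) [CStarAlgebra B]
    (φ : A → B)
    (X₁ : Type) [NormedAddCommGroup X₁] [Module ℂ X₁] [CompleteSpace X₁]
    (M₁ : HilbertModuleStruct B X₁) (σ₁ : A → X₁ → X₁) (e₁ : X₁)
    (h₁ : IsPaschkeDilation M₁ φ σ₁ e₁)
    (X₂ : Type) [NormedAddCommGroup X₂] [Module ℂ X₂] [CompleteSpace X₂]
    (M₂ : HilbertModuleStruct B X₂) (σ₂ : A → X₂ → X₂) (e₂ : X₂)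
    (h₂ : IsPaschkeDilation M₂ φ σ₂ e₂) :
    ∃ W : X₁ ≃ₗ[ℂ] X₂,
      (∀ x y : X₁, M₂.inner (W x) (W y) = M₁.inner x y) ∧
      (∀ (x : X₁) (b : B), W (M₁.smulR x b) = M₂.smulR (W x) b) ∧
      W e₁ = e₂ ∧
      ∀ (a : A) (x : X₁), W (σ₁ a x) = σ₂ a (W x) := by
  let _ := M₁.toNormedSpace
  let _ := M₂.toNormedSpace
  set V := Submodule.span ℂ (dilationPairs M₁ σ₁ e₁ M₂ σ₂ e₂)
  set G := V.topologicalClosure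
  have hinner {p q} (hp : p ∈ G) (hq : q ∈ G) : M₁.inner p.1 q.1 = M₂.inner p.2 q.2 :=
    inner_fst_eq_inner_snd_of_mem_closure h₁ h₂ hp hq
  obtain ⟨W, hW⟩ := G.exists_linearEquiv_eq_graph V.isClosed_topologicalClosure
    (fun p hp => by rw [M₁.norm_eq, M₂.norm_eq, hinner hp hp])
    ((dense_map_fst_span_dilationPairs h₁).mono (Submodule.map_mono V.le_topologicalClosure))
    ((dense_map_snd_span_dilationPairs h₂).mono (Submodule.map_mono V.le_topologicalClosure))
  have hgraph {p : X₁ × X₂} : p ∈ G ↔ W p.1 = p.2 := by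
    rw [hW, LinearMap.mem_graph_iff, eq_comm]
    rfl
  have hmem (x : X₁) : (x, W x) ∈ G := hgraph.mpr rfl
  refine ⟨W, fun x y => (hinner (hmem x) (hmem y)).symm, fun x b => ?_, ?_, fun a x => ?_⟩
  · exact hgraph.mp (mapsTo_smulR_closure_span_dilationPairs h₁ h₂ b (hmem x))
  · exact hgraph.mp (subset_closure (Submodule.subset_span (base_mem_dilationPairs h₁ h₂)))
  · exact hgraph.mp (mapsTo_rep_closure_span_dilationPairs h₁ h₂ a (hmem x))

theorem paschke_dilation_unique
    (A : Type) [CStarAlgebra A] (B : Type) [CStarAlgebra B]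
    (φ : A → B) (hφ : IsCPMapCStar A B φ)
    (X₁ : Type) [NormedAddCommGroup X₁] [Module ℂ X₁] [CompleteSpace X₁]
    (M₁ : HilbertModuleStruct B X₁) (σ₁ : A → X₁ → X₁) (e₁ : X₁)
    (h₁ : IsPaschkeDilation M₁ φ σ₁ e₁)
    (X₂ : Type) [NormedAddCommGroup X₂] [Module ℂ X₂] [CompleteSpace X₂]
    (M₂ : HilbertModuleStruct B X₂) (σ₂ : A → X₂ → X₂) (e₂ : X₂)
    (h₂ : IsPaschkeDilation M₂ φ σ₂ e₂) :
    ∃ W : X₁ ≃ₗ[ℂ] X₂,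
      (∀ x y : X₁, M₂.inner (W x) (W y) = M₁.inner x y) ∧
      (∀ (x : X₁) (b : B), W (M₁.smulR x b) = M₂.smulR (W x) b) ∧
      W e₁ = e₂ ∧
      ∀ (a : A) (x : X₁), W (σ₁ a x) = σ₂ a (W x) :=
  paschke_dilation_unique_general A B φ X₁ M₁ σ₁ e₁ h₁ X₂ M₂ σ₂ e₂ h₂
end
end

section
/- Let A be a unital separable C*-algebra, H a separable Hilbert space, G a group acting on A by τ : G → Aut(A), let φ ∈ UCP_G(A, B(H)), and let μ be a generalized orthogonal measure on UCP(A,B(H)) with barycenter φ. Then μ satisfies ∫ f(φ′) ⟨φ′(τ_{g⁻¹}(ab))h₁, h₂⟩ dμ(φ′) = ∫ f(φ′) ⟨φ′(ab)h₁, h₂⟩ dμ(φ′) for all a, b ∈ A, h₁, h₂ ∈ H, g ∈ G, and f ∈ L^∞(UCP(A,B(H)), μ) if and only if the support of μ is contained in UCP_G(A, B(H)). -/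
/-!
Testing the invariance condition against indicator functions (with `b = 1`) shows that, for each
`g`, `a`, `h₁`, `h₂`, the functions `ψ ↦ ⟪h₁, ψ(τ_g a) h₂⟫` and `ψ ↦ ⟪h₁, ψ(a) h₂⟫` agree μ-a.e.
UCP maps are positive, hence uniformly bounded (`‖ψ a‖ ≤ 4 ‖a‖`) and continuous, so by
separability of `A` and `H` countably many of these identities already force `ψ ∘ τ_g = ψ`.
Since `G` may be uncountable, one more countability argument is needed: for a countable dense
`D ⊆ A`, the restricted orbit maps `g ↦ τ_g|_D` lie in the second countable space `D → A`, so some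
countable `T ⊆ G` has dense image among them, and invariance under `T` propagates to all of `G`
because invariance is a closed condition. Conversely, if μ-a.e. `ψ` is invariant, the two
integrands agree μ-a.e.
-/

open scoped ComplexOrder ComplexInnerProductSpace
open MeasureTheory

noncomputable section

/-- A map `φ : A → B(H)` is completely positive. -/
def IsCPMap (A : Type) [Ring A] [StarRing A] [Algebra ℂ A]
    (H : Type) [NormedAddCommGroup H] [InnerProductSpace ℂ H] [CompleteSpace H]
    (φ : A → (H →L[ℂ] H)) : Prop :=
  (∀ x y, φ (x + y) = φ x + φ y) ∧
  (∀ (c : ℂ) (x : A), φ (c • x) = c • φ x) ∧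
  ∀ (n : ℕ) (a : Fin n → A) (h : Fin n → H),
    0 ≤ ∑ i, ∑ j, ⟪h i, (φ (star (a i) * a j)) (h j)⟫

/-- A unital completely positive map. -/
def IsUCPMap (A : Type) [Ring A] [StarRing A] [Algebra ℂ A]
    (H : Type) [NormedAddCommGroup H] [InnerProductSpace ℂ H] [CompleteSpace H]
    (φ : A → (H →L[ℂ] H)) : Prop :=
  IsCPMap A H φ ∧ φ 1 = 1

/-- The space of UCP maps `A → B(H)`, as a type. -/
def UCPSpace (A : Type) [Ring A] [StarRing A] [Algebra ℂ A]
    (H : Type) [NormedAddCommGroup H] [InnerProductSpace ℂ H] [CompleteSpace H] : Type :=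
  {φ : A → (H →L[ℂ] H) // IsUCPMap A H φ}

/-- The BW topology on `UCPSpace A H`: the topology of pointwise weak convergence. -/
instance UCPSpace.instTopologicalSpace (A : Type) [Ring A] [StarRing A] [Algebra ℂ A]
    (H : Type) [NormedAddCommGroup H] [InnerProductSpace ℂ H] [CompleteSpace H] :
    TopologicalSpace (UCPSpace A H) :=
  TopologicalSpace.induced
    (fun φ : UCPSpace A H => (fun p : A × H × H => ⟪p.2.1, (φ.1 p.1) p.2.2⟫ : A × H × H → ℂ))
    inferInstance

/-- The Borel σ-algebra of the BW topology. -/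
instance UCPSpace.instMeasurableSpace (A : Type) [Ring A] [StarRing A] [Algebra ℂ A]
    (H : Type) [NormedAddCommGroup H] [InnerProductSpace ℂ H] [CompleteSpace H] :
    MeasurableSpace (UCPSpace A H) := borel _

/-- `μ` is a (Borel probability) measure on `UCPSpace A H` with barycenter `φ`,
in the weak sense. -/
def HasBarycenter {A : Type} [Ring A] [StarRing A] [Algebra ℂ A]
    {H : Type} [NormedAddCommGroup H] [InnerProductSpace ℂ H] [CompleteSpace H]
    (μ : MeasureTheory.Measure (UCPSpace A H)) (φ : A → (H →L[ℂ] H)) : Prop :=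
  MeasureTheory.IsProbabilityMeasure μ ∧
  ∀ (a : A) (h₁ h₂ : H), ⟪h₁, φ a h₂⟫ = ∫ ψ, ⟪h₁, (ψ.1 a) h₂⟫ ∂μ

/-- `ψ` is the weak integral `∫_E φ′ dμ` of the identity over `E`. -/
def IsWeakIntegral {A : Type} [Ring A] [StarRing A] [Algebra ℂ A]
    {H : Type} [NormedAddCommGroup H] [InnerProductSpace ℂ H] [CompleteSpace H]
    (μ : MeasureTheory.Measure (UCPSpace A H)) (E : Set (UCPSpace A H))
    (ψ : A → (H →L[ℂ] H)) : Prop :=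
  ∀ (a : A) (h₁ h₂ : H), ⟪h₁, ψ a h₂⟫ = ∫ φ' in E, ⟪h₁, (φ'.1 a) h₂⟫ ∂μ

/-- `(ρ, V, K)` is a minimal Stinespring dilation of `φ : A → B(H)`. -/
def IsMinStinespring (A : Type) [Ring A] [StarRing A] [Algebra ℂ A]
    (H : Type) [NormedAddCommGroup H] [InnerProductSpace ℂ H] [CompleteSpace H]
    (K : Type) [NormedAddCommGroup K] [InnerProductSpace ℂ K] [CompleteSpace K]
    (φ : A → (H →L[ℂ] H)) (ρ : A → (K →L[ℂ] K)) (V : H →L[ℂ] K) : Prop :=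
  (∀ x y, ρ (x + y) = ρ x + ρ y) ∧
  (∀ (c : ℂ) (x : A), ρ (c • x) = c • ρ x) ∧
  (∀ x y, ρ (x * y) = ρ x * ρ y) ∧
  (∀ x, ρ (star x) = star (ρ x)) ∧
  ρ 1 = 1 ∧
  (∀ h, ‖V h‖ = ‖h‖) ∧
  (∀ a, φ a = ContinuousLinearMap.adjoint V ∘L (ρ a ∘L V)) ∧
  Dense (↑(Submodule.span ℂ {k : K | ∃ (a : A) (h : H), ρ a (V h) = k}) : Set K)

/-- The commutant of a set of operators. -/
def commutantSet {M : Type} [Mul M] (S : Set M) : Set M := {T | ∀ s ∈ S, s * T = T * s}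

/-- Two completely positive maps `φ₁ ⊥ φ₂`: for a minimal Stinespring dilation
`V* ρ V` of `φ₁ + φ₂` there is a projection `P ∈ ρ(A)′` with `φ₁ = V* P ρ(·) V` and
`φ₂ = V* (1 - P) ρ(·) V`. -/
def AreOrthogonal {A : Type} [Ring A] [StarRing A] [Algebra ℂ A]
    {H : Type} [NormedAddCommGroup H] [InnerProductSpace ℂ H] [CompleteSpace H]
    (φ₁ φ₂ : A → (H →L[ℂ] H)) : Prop :=
  ∃ (K : Type) (_ : NormedAddCommGroup K) (_ : InnerProductSpace ℂ K) (_ : CompleteSpace K),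
    ∃ (ρ : A → (K →L[ℂ] K)) (V : H →L[ℂ] K),
      IsMinStinespring A H K (fun a => φ₁ a + φ₂ a) ρ V ∧
      ∃ P : K →L[ℂ] K, P ∈ commutantSet (Set.range ρ) ∧ P * P = P ∧ star P = P ∧
        (∀ a, φ₁ a = ContinuousLinearMap.adjoint V ∘L (P ∘L (ρ a ∘L V))) ∧
        (∀ a, φ₂ a = ContinuousLinearMap.adjoint V ∘L ((1 - P) ∘L (ρ a ∘L V)))

/-- `μ` is a generalized orthogonal measure with barycenter `φ`:
for every Borel set `E`, `∫_E φ′ dμ ⊥ ∫_{Eᶜ} φ′ dμ`. -/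
def IsGenOrthogonal {A : Type} [Ring A] [StarRing A] [Algebra ℂ A]
    {H : Type} [NormedAddCommGroup H] [InnerProductSpace ℂ H] [CompleteSpace H]
    (μ : MeasureTheory.Measure (UCPSpace A H)) (φ : A → (H →L[ℂ] H)) : Prop :=
  HasBarycenter μ φ ∧
  ∀ E : Set (UCPSpace A H), MeasurableSet E →
    ∀ ψ₁ ψ₂ : A → (H →L[ℂ] H),
      IsWeakIntegral μ E ψ₁ → IsWeakIntegral μ Eᶜ ψ₂ → AreOrthogonal ψ₁ ψ₂

/-- The invariance condition on a measure `μ` on the UCP space: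
`∫ f(φ′) ⟪h₁, φ′(τ_{g⁻¹}(ab)) h₂⟫ dμ = ∫ f(φ′) ⟪h₁, φ′(ab) h₂⟫ dμ` for every bounded
measurable `f` (i.e. every `f ∈ L^∞(μ)`), all `g ∈ G`, `a, b ∈ A`, `h₁, h₂ ∈ H`. -/
def InvariantCondition {A : Type} [Ring A] [StarRing A] [Algebra ℂ A]
    {H : Type} [NormedAddCommGroup H] [InnerProductSpace ℂ H] [CompleteSpace H]
    {G : Type} [Group G] (τ : G → A ≃⋆ₐ[ℂ] A)
    (μ : MeasureTheory.Measure (UCPSpace A H)) : Prop :=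
  ∀ f : UCPSpace A H → ℂ, Measurable f → (∃ C : ℝ, ∀ ψ, ‖f ψ‖ ≤ C) →
    ∀ (g : G) (a b : A) (h₁ h₂ : H),
      ∫ ψ, f ψ * ⟪h₁, (ψ.1 (τ g⁻¹ (a * b))) h₂⟫ ∂μ =
        ∫ ψ, f ψ * ⟪h₁, (ψ.1 (a * b)) h₂⟫ ∂μ

lemma ContinuousLinearMap.isPositive_of_inner_nonneg
    {H : Type*} [NormedAddCommGroup H] [InnerProductSpace ℂ H] {T : H →L[ℂ] H}
    (hT : ∀ x, 0 ≤ ⟪x, T x⟫) : T.IsPositive := by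
  refine (ContinuousLinearMap.isPositive_iff_complex T).2 fun x => ?_
  obtain ⟨hre, him⟩ := Complex.nonneg_iff.1 (hT x)
  have hsymm : ⟪T x, x⟫ = ⟪x, T x⟫ := by
    rw [← inner_conj_symm, Complex.conj_eq_iff_im, ← him]
  rw [hsymm]
  exact ⟨Complex.ext rfl (by simp [← him]), hre⟩

namespace IsCPMap

variable {A : Type} [Ring A] [StarRing A] [Algebra ℂ A]
  {H : Type} [NormedAddCommGroup H] [InnerProductSpace ℂ H] [CompleteSpace H]
  {ψ : A → (H →L[ℂ] H)}

def toLinearMap (hψ : IsCPMap A H ψ) : A →ₗ[ℂ] (H →L[ℂ] H) where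
  toFun := ψ
  map_add' := hψ.1
  map_smul' := hψ.2.1

lemma isPositive_apply_star_mul_self (hψ : IsCPMap A H ψ) (b : A) :
    (ψ (star b * b)).IsPositive :=
  ContinuousLinearMap.isPositive_of_inner_nonneg fun x => by simpa using hψ.2.2 1 ![b] ![x]

def toPositiveLinearMap {A : Type} [CStarAlgebra A] [PartialOrder A] [StarOrderedRing A]
    {ψ : A → (H →L[ℂ] H)} (hψ : IsCPMap A H ψ) :
    A →ₚ[ℂ] (H →L[ℂ] H) :=
  .mk₀ hψ.toLinearMap fun x hx => by
    obtain ⟨b, rfl⟩ := CStarAlgebra.nonneg_iff_eq_star_mul_self.1 hx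
    exact (ContinuousLinearMap.nonneg_iff_isPositive _).2 (hψ.isPositive_apply_star_mul_self b)

end IsCPMap

namespace IsUCPMap

variable {A : Type} [CStarAlgebra A]
  {H : Type} [NormedAddCommGroup H] [InnerProductSpace ℂ H] [CompleteSpace H]
  {ψ : A → (H →L[ℂ] H)}

lemma norm_apply_le (hψ : IsUCPMap A H ψ) (a : A) : ‖ψ a‖ ≤ 4 * ‖a‖ := by
  let := CStarAlgebra.spectralOrder A
  have := CStarAlgebra.spectralOrderedRing A
  let f := hψ.1.toPositiveLinearMap
  have hf : ∀ x, ψ x = f x := fun _ => rfl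
  obtain ⟨x, hx_nonneg, hx_norm, hx⟩ := CStarAlgebra.exists_sum_four_nonneg a
  have hx_bound : ∀ i, ‖ψ (x i)‖ ≤ ‖a‖ := fun i => calc
    ‖ψ (x i)‖ ≤ ‖ψ 1‖ * ‖x i‖ := f.norm_apply_le_of_nonneg (x i) (hx_nonneg i)
    _ ≤ 1 * ‖a‖ := by
      rw [hψ.2]
      exact mul_le_mul ContinuousLinearMap.norm_id_le (hx_norm i) (norm_nonneg _) zero_le_one
    _ = ‖a‖ := one_mul _
  calc ‖ψ a‖ = ‖∑ i : Fin 4, Complex.I ^ (i : ℕ) • ψ (x i)‖ := by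
        simp only [hf, hx, map_sum, map_smul]
    _ ≤ ∑ i : Fin 4, ‖ψ (x i)‖ := by
        refine (norm_sum_le _ _).trans (le_of_eq ?_)
        simp [norm_smul]
    _ ≤ ∑ _i : Fin 4, ‖a‖ := Finset.sum_le_sum fun i _ => hx_bound i
    _ = 4 * ‖a‖ := by simp

lemma continuous (hψ : IsUCPMap A H ψ) : Continuous ψ :=
  AddMonoidHomClass.continuous_of_bound hψ.1.toLinearMap 4 hψ.norm_apply_le

end IsUCPMap

theorem exists_countable_range_subset_closure_image {G Z : Type*} [TopologicalSpace Z]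
    [SecondCountableTopology Z] (Φ : G → Z) :
    ∃ T : Set G, T.Countable ∧ Set.range Φ ⊆ closure (Φ '' T) := by
  obtain ⟨s, hs_count, hs_dense⟩ := TopologicalSpace.exists_countable_dense (Set.range Φ)
  let σ := Function.surjInv (Set.rangeFactorization_surjective (f := Φ))
  refine ⟨σ '' s, hs_count.image σ, ?_⟩
  have hΦσ : Φ '' (σ '' s) = Subtype.val '' s := by
    rw [Set.image_image]
    exact Set.image_congr fun y _ =>
      congrArg Subtype.val (Function.surjInv_eq Set.rangeFactorization_surjective y)
  exact hΦσ ▸ Subtype.dense_iff.1 hs_dense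

theorem exists_countable_forall_apply_eq {G X Y : Type*} [TopologicalSpace X]
    [SecondCountableTopology X] [TopologicalSpace Y] [T2Space Y]
    (τ : G → X → X) (hτ : ∀ g, Continuous (τ g)) :
    ∃ T : Set G, T.Countable ∧ ∀ ψ : X → Y, Continuous ψ →
      (∀ g ∈ T, ∀ x, ψ (τ g x) = ψ x) → ∀ g x, ψ (τ g x) = ψ x := by
  obtain ⟨D, hD_count, hD_dense⟩ := TopologicalSpace.exists_countable_dense X
  have := hD_count.to_subtype
  obtain ⟨T, hT_count, hT⟩ :=
    exists_countable_range_subset_closure_image fun g (x : D) => τ g x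
  refine ⟨T, hT_count, fun ψ hψ hψT g => congrFun ?_⟩
  have hclosed : IsClosed {f : D → X | ∀ x, ψ (f x) = ψ x} := by
    rw [Set.ofPred_forall]
    exact isClosed_iInter fun x => isClosed_eq (hψ.comp (continuous_apply x)) continuous_const
  have hg : ∀ x : D, ψ (τ g x) = ψ x := hclosed.closure_subset_iff.2
    (by rintro _ ⟨g', hg', rfl⟩ x; exact hψT g' hg' x) (hT ⟨g, rfl⟩)
  exact Continuous.ext_on hD_dense (hψ.comp (hτ g)) hψ fun x hx => hg ⟨x, hx⟩

theorem ContinuousLinearMap.ext_inner_of_dense {𝕜 E F : Type*} [RCLike 𝕜]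
    [NormedAddCommGroup E] [InnerProductSpace 𝕜 E] [NormedAddCommGroup F] [InnerProductSpace 𝕜 F]
    {T S : E →L[𝕜] F} {D : Set E} {D' : Set F} (hD : Dense D) (hD' : Dense D')
    (h : ∀ y ∈ D', ∀ x ∈ D, inner 𝕜 y (T x) = inner 𝕜 y (S x)) : T = S := by
  have hfun : (fun p : F × E => inner 𝕜 p.1 (T p.2)) = fun p => inner 𝕜 p.1 (S p.2) :=
    Continuous.ext_on (hD'.prod hD) (by fun_prop) (by fun_prop) fun p hp => h _ hp.1 _ hp.2
  exact ContinuousLinearMap.ext fun x => ext_inner_left 𝕜 fun y => congrFun hfun (y, x)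

theorem MeasureTheory.Integrable.ae_eq_of_forall_integral_mul_eq {α : Type*} [MeasurableSpace α]
    {μ : Measure α} {X Y : α → ℂ} (hX : Integrable X μ) (hY : Integrable Y μ)
    (h : ∀ f : α → ℂ, Measurable f → (∃ C : ℝ, ∀ x, ‖f x‖ ≤ C) →
      ∫ x, f x * X x ∂μ = ∫ x, f x * Y x ∂μ) :
    X =ᵐ[μ] Y := by
  refine hX.ae_eq_of_forall_setIntegral_eq _ _ hY fun s hs _ => ?_
  have hbound : ∀ x, ‖s.indicator (1 : α → ℂ) x‖ ≤ 1 := fun x =>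
    (norm_indicator_le_norm_self _ x).trans (by simp)
  have hmul : ∀ Z : α → ℂ, ∫ x, s.indicator 1 x * Z x ∂μ = ∫ x in s, Z x ∂μ := fun Z => by
    rw [← integral_indicator hs]
    simp_rw [← Set.indicator_mul_left, Pi.one_apply, one_mul]
  simpa only [hmul] using h (s.indicator 1) (measurable_const.indicator hs) ⟨1, hbound⟩

namespace UCPSpace

section Ring

variable {A : Type} [Ring A] [StarRing A] [Algebra ℂ A]
  {H : Type} [NormedAddCommGroup H] [InnerProductSpace ℂ H] [CompleteSpace H]

instance instBorelSpace : BorelSpace (UCPSpace A H) := ⟨rfl⟩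

lemma continuous_inner_apply (a : A) (h₁ h₂ : H) :
    Continuous fun ψ : UCPSpace A H => ⟪h₁, ψ.1 a h₂⟫ :=
  (continuous_apply (a, h₁, h₂)).comp
    (continuous_induced_dom : Continuous fun ψ : UCPSpace A H =>
      fun p : A × H × H => ⟪p.2.1, ψ.1 p.1 p.2.2⟫)

end Ring

variable {A : Type} [CStarAlgebra A]
  {H : Type} [NormedAddCommGroup H] [InnerProductSpace ℂ H] [CompleteSpace H]

lemma norm_inner_apply_le (ψ : UCPSpace A H) (a : A) (h₁ h₂ : H) :
    ‖⟪h₁, ψ.1 a h₂⟫‖ ≤ ‖h₁‖ * (4 * ‖a‖ * ‖h₂‖) :=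
  (norm_inner_le_norm _ _).trans <| mul_le_mul_of_nonneg_left
    ((ψ.1 a).le_of_opNorm_le (ψ.2.norm_apply_le a) h₂) (norm_nonneg _)

lemma integrable_inner_apply (μ : Measure (UCPSpace A H)) [IsFiniteMeasure μ]
    (a : A) (h₁ h₂ : H) : Integrable (fun ψ : UCPSpace A H => ⟪h₁, ψ.1 a h₂⟫) μ :=
  .of_bound (continuous_inner_apply a h₁ h₂).aestronglyMeasurable _
    (.of_forall fun ψ => norm_inner_apply_le ψ a h₁ h₂)

end UCPSpace

namespace InvariantCondition

variable {A : Type} [CStarAlgebra A]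
  {H : Type} [NormedAddCommGroup H] [InnerProductSpace ℂ H] [CompleteSpace H]
  {G : Type} [Group G] {τ : G → A ≃⋆ₐ[ℂ] A} {μ : Measure (UCPSpace A H)}

lemma ae_inner_apply_eq [IsFiniteMeasure μ] (hμ : InvariantCondition τ μ)
    (g : G) (a : A) (h₁ h₂ : H) :
    ∀ᵐ ψ ∂μ, ⟪h₁, ψ.1 (τ g a) h₂⟫ = ⟪h₁, ψ.1 a h₂⟫ :=
  (UCPSpace.integrable_inner_apply μ _ h₁ h₂).ae_eq_of_forall_integral_mul_eq
    (UCPSpace.integrable_inner_apply μ a h₁ h₂) fun f hf hbound => by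
      simpa only [inv_inv, mul_one] using hμ f hf hbound g⁻¹ a 1 h₁ h₂

lemma ae_forall_apply_eq [IsFiniteMeasure μ] [TopologicalSpace.SeparableSpace A]
    [TopologicalSpace.SeparableSpace H] (hμ : InvariantCondition τ μ) (g : G) :
    ∀ᵐ ψ ∂μ, ∀ a, ψ.1 (τ g a) = ψ.1 a := by
  obtain ⟨DA, hDA_count, hDA_dense⟩ := TopologicalSpace.exists_countable_dense A
  obtain ⟨DH, hDH_count, hDH_dense⟩ := TopologicalSpace.exists_countable_dense H
  have hae : ∀ᵐ ψ ∂μ, ∀ p ∈ DA ×ˢ DH ×ˢ DH,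
      ⟪p.2.1, ψ.1 (τ g p.1) p.2.2⟫ = ⟪p.2.1, ψ.1 p.1 p.2.2⟫ :=
    (ae_ball_iff (hDA_count.prod (hDH_count.prod hDH_count))).2 fun p _ =>
      hμ.ae_inner_apply_eq g p.1 p.2.1 p.2.2
  filter_upwards [hae] with ψ hψ
  have hDA : ∀ a ∈ DA, ψ.1 (τ g a) = ψ.1 a := fun a ha =>
    ContinuousLinearMap.ext_inner_of_dense hDH_dense hDH_dense fun h₁ h₁_mem h₂ h₂_mem =>
      hψ (a, h₁, h₂) ⟨ha, h₁_mem, h₂_mem⟩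
  exact congrFun <| Continuous.ext_on hDA_dense
    (ψ.2.continuous.comp (StarAlgEquiv.isometry (τ g)).continuous) ψ.2.continuous hDA

lemma ae_forall_forall_apply_eq [IsFiniteMeasure μ] [TopologicalSpace.SeparableSpace A]
    [TopologicalSpace.SeparableSpace H] (hμ : InvariantCondition τ μ) :
    ∀ᵐ ψ ∂μ, ∀ g a, ψ.1 (τ g a) = ψ.1 a := by
  have := UniformSpace.secondCountable_of_separable A
  obtain ⟨T, hT_count, hT⟩ := exists_countable_forall_apply_eq (Y := H →L[ℂ] H)
    (fun g => τ g) fun g => (StarAlgEquiv.isometry (τ g)).continuous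
  filter_upwards [(ae_ball_iff hT_count).2 fun g _ => hμ.ae_forall_apply_eq g] with ψ hψ
  exact hT ψ.1 ψ.2.continuous hψ

lemma of_ae_forall_forall_apply_eq (hμ : ∀ᵐ ψ ∂μ, ∀ g a, ψ.1 (τ g a) = ψ.1 a) :
    InvariantCondition τ μ := fun f _ _ g a b h₁ h₂ =>
  integral_congr_ae <| hμ.mono fun ψ hψ => by dsimp only; rw [hψ]

end InvariantCondition

theorem invariant_condition_iff_supported_on_invariant_ucp_general
    (A : Type) [CStarAlgebra A] [TopologicalSpace.SeparableSpace A]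
    (H : Type) [NormedAddCommGroup H] [InnerProductSpace ℂ H] [CompleteSpace H]
    [TopologicalSpace.SeparableSpace H]
    (G : Type) [Group G] (τ : G → A ≃⋆ₐ[ℂ] A)
    (φ : A → (H →L[ℂ] H))
    (μ : Measure (UCPSpace A H)) (hμ : IsGenOrthogonal μ φ) :
    InvariantCondition τ μ ↔
      μ {ψ : UCPSpace A H | ¬ ∀ (g : G) (a : A), ψ.1 (τ g a) = ψ.1 a} = 0 := by
  have : IsProbabilityMeasure μ := hμ.1.1
  rw [← ae_iff]
  exact ⟨InvariantCondition.ae_forall_forall_apply_eq,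
    InvariantCondition.of_ae_forall_forall_apply_eq⟩

theorem invariant_condition_iff_supported_on_invariant_ucp
    (A : Type) [CStarAlgebra A] [TopologicalSpace.SeparableSpace A]
    (H : Type) [NormedAddCommGroup H] [InnerProductSpace ℂ H] [CompleteSpace H]
    [TopologicalSpace.SeparableSpace H]
    (G : Type) [Group G] (τ : G → A ≃⋆ₐ[ℂ] A)
    (hτ : ∀ (g₁ g₂ : G) (a : A), τ (g₁ * g₂) a = τ g₁ (τ g₂ a))
    (φ : A → (H →L[ℂ] H)) (hφ : IsUCPMap A H φ)
    (hφinv : ∀ (g : G) (a : A), φ (τ g a) = φ a)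
    (μ : Measure (UCPSpace A H)) (hμ : IsGenOrthogonal μ φ) :
    InvariantCondition τ μ ↔
      μ {ψ : UCPSpace A H | ¬ ∀ (g : G) (a : A), ψ.1 (τ g a) = ψ.1 a} = 0 :=
  invariant_condition_iff_supported_on_invariant_ucp_general A H G τ φ μ hμ
end
end

section
/- Let A be a unital separable C*-algebra, H a separable Hilbert space, G a group acting on A by τ : G → Aut(A), let φ ∈ UCP_G(A, B(H)) with minimal Stinespring dilation (ρ, V, K) and associated unitary representation U_φ of G on K. Then the map T ↦ φ_T := V* T ρ(·) V is an affine order isomorphism of the partially ordered convex set {T ∈ (ρ(A) ∪ U_φ(G))′ : 0 ≤ T ≤ 1_K} onto [0, φ] ∩ CP_G(A, B(H)). In particular, for T ∈ ρ(A)′ with 0 ≤ T ≤ 1_K, φ_T is G-invariant if and only if T commutes with every U_φ(g). -/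
/-!
STATEMENT 8: For `φ ∈ UCP_G(A, B(H))` with minimal Stinespring dilation `(ρ, V, K)` and
associated unitary representation `U_φ`, the map `T ↦ φ_T := V* T ρ(·) V` is an affine
order isomorphism of `{T ∈ (ρ(A) ∪ U_φ(G))′ : 0 ≤ T ≤ 1_K}` onto `[0, φ] ∩ CP_G(A, B(H))`.
In particular, for `T ∈ ρ(A)′` with `0 ≤ T ≤ 1_K`, `φ_T` is `G`-invariant iff `T`
commutes with every `U_φ(g)`.
-/

open scoped ComplexOrder ComplexInnerProductSpace

noncomputable section

/-- A positive operator on a Hilbert space. -/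
def IsPosOp {K : Type} [NormedAddCommGroup K] [InnerProductSpace ℂ K]
    (T : K →L[ℂ] K) : Prop :=
  ∀ ξ : K, 0 ≤ ⟪ξ, T ξ⟫

/-- The Radon–Nikodym type map `T ↦ φ_T = V* T ρ(·) V` of Arveson. -/
def phiT {A : Type} [Ring A] [StarRing A] [Algebra ℂ A]
    {H : Type} [NormedAddCommGroup H] [InnerProductSpace ℂ H] [CompleteSpace H]
    {K : Type} [NormedAddCommGroup K] [InnerProductSpace ℂ K] [CompleteSpace K]
    (ρ : A → (K →L[ℂ] K)) (V : H →L[ℂ] K) (T : K →L[ℂ] K) : A → (H →L[ℂ] H) :=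
  fun a => ContinuousLinearMap.adjoint V ∘L (T ∘L (ρ a ∘L V))

/-!
The pairing `⟪a ⊗ h, b ⊗ k⟫_θ = ⟪h, θ (a⋆ b) k⟫` on the algebraic tensor product `A ⊙ H` is
positive semidefinite exactly when `θ` is completely positive, and for `θ = φ` it is the inner
product of the vectors `ρ(a) V h`, which span a dense subspace of `K`. If `0 ≤ θ ≤ φ`, the
pairing of `θ` lies between `0` and that of `φ`, so by Cauchy–Schwarz it descends to a bounded
sesquilinear form on this dense subspace, represented by an operator `T` on `K` with
`⟪ρ(b) V k, T ρ(a) V h⟫ = ⟪k, θ (b⋆ a) h⟫`. These matrix coefficients determine `T`, and all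
its further properties (`T ∈ ρ(A)′`, `0 ≤ T ≤ 1`, `θ = φ_T`) are read off them. Since
`U_g ρ(a) V = ρ(τ_g a) V` and `U_g⋆ V = V`, the coefficients of `U_g T` and `T U_g` are those of
`θ` at `τ_g⁻¹(b)⋆ a` and at `b⋆ τ_g(a)`, which coincide for all `a, b` exactly when `θ` is
`τ_g`-invariant.
-/

namespace LinearMap

variable {M : Type*} [AddCommGroup M] [Module ℂ M] {B : M →ₗ⋆[ℂ] M →ₗ[ℂ] ℂ}

theorem IsNonneg.isSymm (hB : B.IsNonneg) : B.IsSymm := by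
  refine ⟨fun x y => ?_⟩
  have hx := Complex.nonneg_iff.1 (hB.nonneg x)
  have hy := Complex.nonneg_iff.1 (hB.nonneg y)
  -- the imaginary parts of `B (x + y) (x + y)` and `B (x + I • y) (x + I • y)` vanish
  have h₁ := Complex.nonneg_iff.1 (hB.nonneg (x + y))
  have h₂ := Complex.nonneg_iff.1 (hB.nonneg (x + Complex.I • y))
  simp only [map_add, map_smulₛₗ, add_apply, smul_apply, Complex.conj_I, smul_eq_mul,
    RingHom.id_apply, Complex.add_re, Complex.add_im, Complex.mul_re, Complex.mul_im,
    Complex.neg_re, Complex.neg_im, Complex.I_re, Complex.I_im] at h₁ h₂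
  apply Complex.ext <;> simp <;> linarith [hx.2, hy.2]

theorem IsNonneg.norm_sq_le (hB : B.IsNonneg) (x y : M) :
    ‖B x y‖ ^ 2 ≤ (B x x).re * (B y y).re := by
  let _ : PreInnerProductSpace.Core ℂ M :=
    { inner x y := B x y
      conj_inner_symm x y := hB.isSymm.eq y x
      re_inner_nonneg x := (Complex.nonneg_iff.1 (hB.nonneg x)).1
      add_left x y z := by simp
      smul_left x y r := by simp }
  have h : ‖B x y‖ * ‖B y x‖ ≤ (B x x).re * (B y y).re :=
    InnerProductSpace.Core.inner_mul_inner_self_le (𝕜 := ℂ) x y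
  rwa [← hB.isSymm.eq x y, RCLike.norm_conj, ← sq] at h

end LinearMap

section HilbertSpace

variable {K : Type} [NormedAddCommGroup K] [InnerProductSpace ℂ K]

theorem ContinuousLinearMap.ext_inner_of_dense_span {s : Set K}
    (hs : Dense (Submodule.span ℂ s : Set K)) {S₁ S₂ : K →L[ℂ] K}
    (h : ∀ u ∈ s, ∀ v ∈ s, ⟪u, S₁ v⟫ = ⟪u, S₂ v⟫) : S₁ = S₂ := by
  refine ContinuousLinearMap.ext_on hs fun v hv => ext_inner_left ℂ fun u => ?_
  have : (innerSL ℂ).flip (S₁ v) = (innerSL ℂ).flip (S₂ v) :=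
    ContinuousLinearMap.ext_on hs fun u hu => h u hu v hv
  exact congr($this u)

theorem DenseRange.isPosOp {M : Type*} {W : M → K} (hW : DenseRange W) {S : K →L[ℂ] K}
    (h : ∀ x, 0 ≤ ⟪W x, S (W x)⟫) : IsPosOp S := fun ξ =>
  hW.induction_on ξ (isClosed_le continuous_const (by fun_prop)) h

theorem DenseRange.exists_inner_apply_eq [CompleteSpace K] {M : Type*} [AddCommGroup M]
    [Module ℂ M] {W : M →ₗ[ℂ] K} (hW : DenseRange W) (B : M →ₗ⋆[ℂ] M →ₗ[ℂ] ℂ) {C : ℝ}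
    (hC : 0 ≤ C) (hB : ∀ x y, ‖B x y‖ ≤ C * ‖W x‖ * ‖W y‖) :
    ∃ T : K →L[ℂ] K, ∀ x y, ⟪W x, T (W y)⟫ = B x y := by
  have hBx (x : M) : ∃ C', ∀ y, ‖B x y‖ ≤ C' * ‖W y‖ := ⟨C * ‖W x‖, hB x⟩
  let E : M →ₗ⋆[ℂ] (K →L[ℂ] ℂ) :=
    { toFun x := (B x).extendOfNorm W
      map_add' x₁ x₂ := by
        refine LinearMap.extendOfNorm_unique hW _ (hB (x₁ + x₂)) _ ?_
        ext y
        simp [LinearMap.extendOfNorm_eq hW (hBx _)]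
      map_smul' c x := by
        refine LinearMap.extendOfNorm_unique hW _ (hB (c • x)) _ ?_
        ext y
        simp [LinearMap.extendOfNorm_eq hW (hBx _)] }
  have hE (x : M) : ‖E x‖ ≤ C * ‖W x‖ :=
    LinearMap.opNorm_extendOfNorm_le hW (by positivity) (hB x)
  have hE_apply (x y : M) : E x (W y) = B x y := LinearMap.extendOfNorm_eq hW (hBx x) y
  let S := InnerProductSpace.continuousLinearMapOfBilin (E.extendOfNorm W)
  refine ⟨ContinuousLinearMap.adjoint S, fun x y => ?_⟩
  rw [ContinuousLinearMap.adjoint_inner_right, InnerProductSpace.continuousLinearMapOfBilin_apply,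
    LinearMap.extendOfNorm_eq hW ⟨C, hE⟩, hE_apply]

end HilbertSpace

theorem Finsupp.exists_fin_sum_single {α M : Type*} [AddCommMonoid M] (x : α →₀ M) :
    ∃ (n : ℕ) (a : Fin n → α) (m : Fin n → M), ∑ i, Finsupp.single (a i) (m i) = x := by
  induction x using Finsupp.induction with
  | zero => exact ⟨0, Fin.elim0, Fin.elim0, by simp⟩
  | single_add a b f _ _ ih =>
    obtain ⟨n, a', m', rfl⟩ := ih
    exact ⟨n + 1, Fin.cons a a', Fin.cons b m', by simp [Fin.sum_univ_succ]⟩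

section StinespringMap

variable {A : Type} {H : Type} [NormedAddCommGroup H] [InnerProductSpace ℂ H]
  {K : Type} [NormedAddCommGroup K] [InnerProductSpace ℂ K]
  {ρ : A → (K →L[ℂ] K)} {V : H →L[ℂ] K}

/- A vector `x : A →₀ H` stands for the tensor `∑ a, a ⊗ x a` of the algebraic tensor
product `A ⊙ H`. -/
def stinespringMap (ρ : A → (K →L[ℂ] K)) (V : H →L[ℂ] K) : (A →₀ H) →ₗ[ℂ] K :=
  Finsupp.lsum ℂ fun a => (ρ a ∘L V).toLinearMap

@[simp]
theorem stinespringMap_single (a : A) (h : H) :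
    stinespringMap ρ V (Finsupp.single a h) = ρ a (V h) := by
  simp [stinespringMap]

end StinespringMap

section StinespringForm

variable {A : Type} [Mul A] [Star A] {H : Type} [NormedAddCommGroup H] [InnerProductSpace ℂ H]
  {K : Type} [NormedAddCommGroup K] [InnerProductSpace ℂ K]
  {θ θ₁ θ₂ : A → (H →L[ℂ] H)} {ρ : A → (K →L[ℂ] K)} {V : H →L[ℂ] K} {T T₁ T₂ : K →L[ℂ] K}

def stinespringForm (θ : A → (H →L[ℂ] H)) : (A →₀ H) →ₗ⋆[ℂ] (A →₀ H) →ₗ[ℂ] ℂ :=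
  LinearMap.mk₂'ₛₗ (starRingEnd ℂ) (RingHom.id ℂ)
    (fun x y => x.sum fun a h => y.sum fun b k => ⟪h, θ (star a * b) k⟫)
    (fun x₁ x₂ y => by
      refine Finsupp.sum_add_index' (fun _ => by simp) fun _ _ _ => ?_
      simp [Finsupp.sum_add])
    (fun c x y => by
      rw [Finsupp.sum_smul_index' (fun _ => by simp), Finsupp.smul_sum]
      simp only [Finsupp.sum, Finset.mul_sum, inner_smul_left, smul_eq_mul])
    (fun x y₁ y₂ => by
      simp only [← Finsupp.sum_add]
      refine Finsupp.sum_congr fun _ _ => Finsupp.sum_add_index' (fun _ => by simp) ?_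
      simp)
    (fun c x y => by
      simp only [RingHom.id_apply, Finsupp.smul_sum]
      refine Finsupp.sum_congr fun _ _ => ?_
      rw [Finsupp.sum_smul_index' (fun _ => by simp)]
      simp)

@[simp]
theorem stinespringForm_single (a b : A) (h k : H) :
    stinespringForm θ (Finsupp.single a h) (Finsupp.single b k) = ⟪h, θ (star a * b) k⟫ := by
  simp [stinespringForm]

theorem stinespringForm_sub (θ₁ θ₂ : A → (H →L[ℂ] H)) :
    stinespringForm (θ₁ - θ₂) = stinespringForm θ₁ - stinespringForm θ₂ := by
  ext x y
  simp [stinespringForm, Finsupp.sum_sub]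

theorem stinespringForm_sum_single {n : ℕ} (a : Fin n → A) (h : Fin n → H) :
    stinespringForm θ (∑ i, Finsupp.single (a i) (h i)) (∑ j, Finsupp.single (a j) (h j)) =
      ∑ i, ∑ j, ⟪h i, θ (star (a i) * a j) (h j)⟫ := by
  simp only [map_sum, LinearMap.sum_apply, stinespringForm_single]
  exact Finset.sum_comm

def IsRadonNikodymDeriv (ρ : A → (K →L[ℂ] K)) (V : H →L[ℂ] K) (θ : A → (H →L[ℂ] H))
    (T : K →L[ℂ] K) : Prop :=
  ∀ a b h k, ⟪ρ b (V k), T (ρ a (V h))⟫ = ⟪k, θ (star b * a) h⟫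

theorem IsRadonNikodymDeriv.sub (h₁ : IsRadonNikodymDeriv ρ V θ₁ T₁)
    (h₂ : IsRadonNikodymDeriv ρ V θ₂ T₂) : IsRadonNikodymDeriv ρ V (θ₁ - θ₂) (T₁ - T₂) := by
  intro a b h k
  simp [h₁ a b h k, h₂ a b h k]

theorem IsRadonNikodymDeriv.inner_stinespringMap (hT : IsRadonNikodymDeriv ρ V θ T)
    (x y : A →₀ H) :
    ⟪stinespringMap ρ V x, T (stinespringMap ρ V y)⟫ = stinespringForm θ x y := by
  induction x using Finsupp.induction_linear with
  | zero => simp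
  | add x₁ x₂ h₁ h₂ => simp only [map_add, inner_add_left, LinearMap.add_apply, h₁, h₂]
  | single b k =>
    induction y using Finsupp.induction_linear with
    | zero => simp
    | add y₁ y₂ h₁ h₂ => simp only [map_add, inner_add_right, h₁, h₂]
    | single a h => simp [hT a b h k]

end StinespringForm

section CompletelyPositive

variable {A : Type} [Ring A] [StarRing A] [Algebra ℂ A]
  {H : Type} [NormedAddCommGroup H] [InnerProductSpace ℂ H] [CompleteSpace H]
  {θ : A → (H →L[ℂ] H)}

theorem isCPMap_iff : IsCPMap A H θ ↔ (∀ x y, θ (x + y) = θ x + θ y) ∧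
    (∀ (c : ℂ) (x : A), θ (c • x) = c • θ x) ∧ (stinespringForm θ).IsNonneg := by
  refine and_congr .rfl (and_congr .rfl ⟨fun hθ => ⟨fun x => ?_⟩, fun hθ n a h => ?_⟩)
  · obtain ⟨n, a, h, rfl⟩ := x.exists_fin_sum_single
    rw [stinespringForm_sum_single]
    exact hθ n a h
  · rw [← stinespringForm_sum_single]
    exact hθ.nonneg _

theorem IsCPMap.isNonneg_stinespringForm (hθ : IsCPMap A H θ) : (stinespringForm θ).IsNonneg :=
  (isCPMap_iff.1 hθ).2.2

end CompletelyPositive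

section Stinespring

variable {A : Type} [Ring A] [StarRing A] [Algebra ℂ A]
  {H : Type} [NormedAddCommGroup H] [InnerProductSpace ℂ H] [CompleteSpace H]
  {K : Type} [NormedAddCommGroup K] [InnerProductSpace ℂ K] [CompleteSpace K]
  {φ θ : A → (H →L[ℂ] H)} {ρ : A → (K →L[ℂ] K)} {V : H →L[ℂ] K} {T : K →L[ℂ] K}

theorem inner_phiT (a : A) (h k : H) : ⟪k, phiT ρ V T a h⟫ = ⟪V k, T (ρ a (V h))⟫ := by
  simp [phiT, ContinuousLinearMap.adjoint_inner_right]

theorem phiT_sub (T₁ T₂ : K →L[ℂ] K) :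
    phiT ρ V (T₁ - T₂) = fun a => phiT ρ V T₁ a - phiT ρ V T₂ a := by
  ext a h
  simp [phiT]

namespace IsMinStinespring

theorem map_add (hmin : IsMinStinespring A H K φ ρ V) (x y : A) : ρ (x + y) = ρ x + ρ y :=
  hmin.1 x y

theorem map_smul (hmin : IsMinStinespring A H K φ ρ V) (c : ℂ) (x : A) : ρ (c • x) = c • ρ x :=
  hmin.2.1 c x

theorem map_mul_apply (hmin : IsMinStinespring A H K φ ρ V) (x y : A) (v : K) :
    ρ (x * y) v = ρ x (ρ y v) := by
  rw [hmin.2.2.1 x y]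
  rfl

theorem inner_map_left (hmin : IsMinStinespring A H K φ ρ V) (a : A) (u w : K) :
    ⟪ρ a u, w⟫ = ⟪u, ρ (star a) w⟫ := by
  rw [hmin.2.2.2.1, ContinuousLinearMap.star_eq_adjoint,
    ContinuousLinearMap.adjoint_inner_right]

theorem inner_map_right (hmin : IsMinStinespring A H K φ ρ V) (a : A) (u w : K) :
    ⟪u, ρ a w⟫ = ⟪ρ (star a) u, w⟫ := by
  rw [hmin.inner_map_left, star_star]

theorem map_one (hmin : IsMinStinespring A H K φ ρ V) : ρ 1 = 1 :=
  hmin.2.2.2.2.1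

theorem phiT_one (hmin : IsMinStinespring A H K φ ρ V) : phiT ρ V 1 = φ :=
  funext fun a => (hmin.2.2.2.2.2.2.1 a).symm

theorem dense_span (hmin : IsMinStinespring A H K φ ρ V) :
    Dense (Submodule.span ℂ {k : K | ∃ (a : A) (h : H), ρ a (V h) = k} : Set K) :=
  hmin.2.2.2.2.2.2.2

theorem denseRange_stinespringMap (hmin : IsMinStinespring A H K φ ρ V) :
    DenseRange (stinespringMap ρ V) := by
  refine hmin.dense_span.mono fun _ hξ => ?_
  refine (Submodule.span_le (p := LinearMap.range (stinespringMap ρ V))).2 ?_ hξ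
  rintro _ ⟨a, h, rfl⟩
  exact ⟨Finsupp.single a h, stinespringMap_single a h⟩

end IsMinStinespring

theorem isRadonNikodymDeriv_phiT (hmin : IsMinStinespring A H K φ ρ V)
    (hT : ∀ a, Commute (ρ a) T) : IsRadonNikodymDeriv ρ V (phiT ρ V T) T := by
  intro a b h k
  rw [inner_phiT, hmin.inner_map_left, ← mul_apply_eq_comp, (hT _).eq, mul_apply_eq_comp,
    ← hmin.map_mul_apply]

theorem IsMinStinespring.isRadonNikodymDeriv_one (hmin : IsMinStinespring A H K φ ρ V) :
    IsRadonNikodymDeriv ρ V φ 1 :=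
  hmin.phiT_one ▸ isRadonNikodymDeriv_phiT hmin fun _ => Commute.one_right _

theorem isCPMap_phiT (hmin : IsMinStinespring A H K φ ρ V) (hT : ∀ a, Commute (ρ a) T)
    (hpos : IsPosOp T) : IsCPMap A H (phiT ρ V T) := by
  refine isCPMap_iff.2 ⟨fun x y => ?_, fun c x => ?_, ⟨fun x => ?_⟩⟩
  · ext h
    simp [phiT, hmin.map_add]
  · ext h
    simp [phiT, hmin.map_smul]
  · rw [← (isRadonNikodymDeriv_phiT hmin hT).inner_stinespringMap]
    exact hpos _

theorem IsRadonNikodymDeriv.isPosOp (hmin : IsMinStinespring A H K φ ρ V)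
    (hT : IsRadonNikodymDeriv ρ V θ T) (hθ : (stinespringForm θ).IsNonneg) : IsPosOp T :=
  hmin.denseRange_stinespringMap.isPosOp fun x => hT.inner_stinespringMap x x ▸ hθ.nonneg x

theorem IsRadonNikodymDeriv.commute (hmin : IsMinStinespring A H K φ ρ V)
    (hT : IsRadonNikodymDeriv ρ V θ T) (c : A) : Commute (ρ c) T := by
  refine ContinuousLinearMap.ext_inner_of_dense_span hmin.dense_span ?_
  rintro _ ⟨b, k, rfl⟩ _ ⟨a, h, rfl⟩
  rw [mul_apply_eq_comp, mul_apply_eq_comp, hmin.inner_map_right, ← hmin.map_mul_apply,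
    ← hmin.map_mul_apply, hT, hT, star_mul, star_star, mul_assoc]

theorem IsRadonNikodymDeriv.eq_phiT (hmin : IsMinStinespring A H K φ ρ V)
    (hT : IsRadonNikodymDeriv ρ V θ T) : θ = phiT ρ V T := by
  ext a h : 2
  refine ext_inner_left ℂ fun k => ?_
  rw [inner_phiT, ← one_mul a, ← star_one A, ← hT, hmin.map_one, star_one, one_mul]
  rfl

theorem IsRadonNikodymDeriv.unique (hmin : IsMinStinespring A H K φ ρ V)
    {T₁ T₂ : K →L[ℂ] K} (h₁ : IsRadonNikodymDeriv ρ V θ T₁) (h₂ : IsRadonNikodymDeriv ρ V θ T₂) :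
    T₁ = T₂ := by
  refine ContinuousLinearMap.ext_inner_of_dense_span hmin.dense_span ?_
  rintro _ ⟨b, k, rfl⟩ _ ⟨a, h, rfl⟩
  rw [h₁, h₂]

theorem norm_stinespringForm_le (hmin : IsMinStinespring A H K φ ρ V) (hθ : IsCPMap A H θ)
    (hφθ : IsCPMap A H (φ - θ)) (x y : A →₀ H) :
    ‖stinespringForm θ x y‖ ≤ ‖stinespringMap ρ V x‖ * ‖stinespringMap ρ V y‖ := by
  have hle (x : A →₀ H) : (stinespringForm θ x x).re ≤ ‖stinespringMap ρ V x‖ ^ 2 := by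
    have h := (Complex.nonneg_iff.1 (hφθ.isNonneg_stinespringForm.nonneg x)).1
    rw [stinespringForm_sub, LinearMap.sub_apply, LinearMap.sub_apply,
      ← hmin.isRadonNikodymDeriv_one.inner_stinespringMap, one_apply_eq_self, Complex.sub_re,
      ← RCLike.re_to_complex, inner_self_eq_norm_sq] at h
    linarith
  have hy := (Complex.nonneg_iff.1 (hθ.isNonneg_stinespringForm.nonneg y)).1
  refine (sq_le_sq₀ (norm_nonneg _) (by positivity)).1 ?_
  calc ‖stinespringForm θ x y‖ ^ 2
      ≤ (stinespringForm θ x x).re * (stinespringForm θ y y).re :=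
        hθ.isNonneg_stinespringForm.norm_sq_le x y
    _ ≤ ‖stinespringMap ρ V x‖ ^ 2 * ‖stinespringMap ρ V y‖ ^ 2 :=
        mul_le_mul (hle x) (hle y) hy (by positivity)
    _ = _ := by ring

theorem exists_isRadonNikodymDeriv (hmin : IsMinStinespring A H K φ ρ V) (hθ : IsCPMap A H θ)
    (hφθ : IsCPMap A H (φ - θ)) : ∃ T, IsRadonNikodymDeriv ρ V θ T := by
  obtain ⟨T, hT⟩ := hmin.denseRange_stinespringMap.exists_inner_apply_eq (stinespringForm θ)
    zero_le_one fun x y => by simpa [mul_assoc] using norm_stinespringForm_le hmin hθ hφθ x y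
  exact ⟨T, fun a b h k => by simpa using hT (Finsupp.single b k) (Finsupp.single a h)⟩

end Stinespring

section Unitary

variable {A : Type} [Ring A] [StarRing A] [Algebra ℂ A]
  {H : Type} [NormedAddCommGroup H] [InnerProductSpace ℂ H]
  {K : Type} [NormedAddCommGroup K] [InnerProductSpace ℂ K] [CompleteSpace K]
  {ρ : A → (K →L[ℂ] K)} {V : H →L[ℂ] K} {u : K →L[ℂ] K} {σ : A ≃⋆ₐ[ℂ] A}

theorem star_apply_eq_self_of_apply_eq_self (hu : star u * u = 1) (huV : ∀ h, u (V h) = V h)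
    (h : H) : star u (V h) = V h := by
  conv_lhs => rw [← huV h, ← mul_apply_eq_comp, hu]
  rfl

theorem inner_apply_eq_of_apply_eq_self (hu : star u * u = 1) (huV : ∀ h, u (V h) = V h) (k : H)
    (w : K) : ⟪V k, u w⟫ = ⟪V k, w⟫ := by
  rw [← ContinuousLinearMap.adjoint_inner_left, ← ContinuousLinearMap.star_eq_adjoint,
    star_apply_eq_self_of_apply_eq_self hu huV]

theorem apply_map_apply_eq (hu : star u * u = 1) (huV : ∀ h, u (V h) = V h)
    (huρ : ∀ a, u * ρ a * star u = ρ (σ a)) (a : A) (h : H) :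
    u (ρ a (V h)) = ρ (σ a) (V h) := by
  rw [← huρ, mul_apply_eq_comp, mul_apply_eq_comp, star_apply_eq_self_of_apply_eq_self hu huV]

theorem star_apply_map_apply_eq (hu : star u * u = 1) (huV : ∀ h, u (V h) = V h)
    (huρ : ∀ a, u * ρ a * star u = ρ (σ a)) (a : A) (h : H) :
    star u (ρ (σ a) (V h)) = ρ a (V h) := by
  rw [← apply_map_apply_eq hu huV huρ, ← mul_apply_eq_comp, hu]
  rfl

end Unitary

section Covariance

variable {A : Type} [Ring A] [StarRing A] [Algebra ℂ A]
  {H : Type} [NormedAddCommGroup H] [InnerProductSpace ℂ H] [CompleteSpace H]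
  {K : Type} [NormedAddCommGroup K] [InnerProductSpace ℂ K] [CompleteSpace K]
  {φ θ : A → (H →L[ℂ] H)} {ρ : A → (K →L[ℂ] K)} {V : H →L[ℂ] K} {T : K →L[ℂ] K}
  {u : K →L[ℂ] K} {σ : A ≃⋆ₐ[ℂ] A}

theorem phiT_map_eq_of_commute (hu : star u * u = 1) (huV : ∀ h, u (V h) = V h)
    (huρ : ∀ a, u * ρ a * star u = ρ (σ a)) (hTu : Commute T u) (a : A) :
    phiT ρ V T (σ a) = phiT ρ V T a := by
  ext h
  refine ext_inner_left ℂ fun k => ?_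
  rw [inner_phiT, inner_phiT, ← apply_map_apply_eq hu huV huρ, ← mul_apply_eq_comp T, hTu.eq,
    mul_apply_eq_comp, inner_apply_eq_of_apply_eq_self hu huV]

theorem IsRadonNikodymDeriv.commute_of_map_eq (hmin : IsMinStinespring A H K φ ρ V)
    (hT : IsRadonNikodymDeriv ρ V θ T) (hu : star u * u = 1) (huV : ∀ h, u (V h) = V h)
    (huρ : ∀ a, u * ρ a * star u = ρ (σ a)) (hθ : ∀ a, θ (σ a) = θ a) : Commute u T := by
  refine ContinuousLinearMap.ext_inner_of_dense_span hmin.dense_span ?_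
  rintro _ ⟨b, k, rfl⟩ _ ⟨a, h, rfl⟩
  rw [mul_apply_eq_comp, mul_apply_eq_comp, apply_map_apply_eq hu huV huρ, ← σ.apply_symm_apply b,
    ← ContinuousLinearMap.adjoint_inner_left, ← ContinuousLinearMap.star_eq_adjoint,
    star_apply_map_apply_eq hu huV huρ, hT, hT, ← hθ, map_mul, map_star, σ.apply_symm_apply]

end Covariance

theorem mem_commutantSet_range {M : Type} [Mul M] {ι : Type*} {f : ι → M} {T : M} :
    T ∈ commutantSet (Set.range f) ↔ ∀ i, Commute (f i) T := by
  simp [commutantSet, Commute, SemiconjBy]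

theorem mem_commutantSet_range_union {M : Type} [Mul M] {ι κ : Type*} {f : ι → M} {g : κ → M}
    {T : M} : T ∈ commutantSet (Set.range f ∪ Set.range g) ↔
      (∀ i, Commute (f i) T) ∧ ∀ j, Commute (g j) T := by
  simp [commutantSet, Commute, SemiconjBy, or_imp, forall_and]

theorem radon_nikodym_G_invariant_stinespring_general
    (A : Type) [CStarAlgebra A]
    (H : Type) [NormedAddCommGroup H] [InnerProductSpace ℂ H] [CompleteSpace H]
    (G : Type) (τ : G → A ≃⋆ₐ[ℂ] A)
    (φ : A → (H →L[ℂ] H))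
    (K : Type) [NormedAddCommGroup K] [InnerProductSpace ℂ K] [CompleteSpace K]
    (ρ : A → (K →L[ℂ] K)) (V : H →L[ℂ] K)
    (hmin : IsMinStinespring A H K φ ρ V)
    (U : G → (K →L[ℂ] K))
    (hU : ∀ g, star (U g) * U g = 1 ∧ U g * star (U g) = 1)
    (hUV : ∀ (g : G) (h : H), (U g) (V h) = V h)
    (hUρ : ∀ (g : G) (a : A), U g * ρ a * star (U g) = ρ (τ g a)) :
    -- the map `T ↦ φ_T` sends the operator interval into `[0, φ] ∩ CP_G`:
    (∀ T ∈ commutantSet (Set.range ρ ∪ Set.range U), IsPosOp T → IsPosOp (1 - T) →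
      IsCPMap A H (phiT ρ V T) ∧ IsCPMap A H (fun a => φ a - phiT ρ V T a) ∧
        ∀ (g : G) (a : A), phiT ρ V T (τ g a) = phiT ρ V T a) ∧
    -- injectivity:
    (∀ T₁ ∈ commutantSet (Set.range ρ ∪ Set.range U),
      ∀ T₂ ∈ commutantSet (Set.range ρ ∪ Set.range U),
      IsPosOp T₁ → IsPosOp (1 - T₁) → IsPosOp T₂ → IsPosOp (1 - T₂) →
      phiT ρ V T₁ = phiT ρ V T₂ → T₁ = T₂) ∧
    -- surjectivity onto `[0, φ] ∩ CP_G`: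
    (∀ θ : A → (H →L[ℂ] H), IsCPMap A H θ → IsCPMap A H (fun a => φ a - θ a) →
      (∀ (g : G) (a : A), θ (τ g a) = θ a) →
      ∃ T ∈ commutantSet (Set.range ρ ∪ Set.range U),
        IsPosOp T ∧ IsPosOp (1 - T) ∧ θ = phiT ρ V T) ∧
    -- order isomorphism:
    (∀ T₁ ∈ commutantSet (Set.range ρ ∪ Set.range U),
      ∀ T₂ ∈ commutantSet (Set.range ρ ∪ Set.range U),
      IsPosOp T₁ → IsPosOp (1 - T₁) → IsPosOp T₂ → IsPosOp (1 - T₂) →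
      (IsPosOp (T₂ - T₁) ↔ IsCPMap A H (fun a => phiT ρ V T₂ a - phiT ρ V T₁ a))) ∧
    -- affineness:
    (∀ T₁ T₂ : K →L[ℂ] K, ∀ t : ℝ, 0 ≤ t → t ≤ 1 →
      phiT ρ V ((t : ℂ) • T₁ + ((1 - t : ℝ) : ℂ) • T₂) =
        fun a => (t : ℂ) • phiT ρ V T₁ a + ((1 - t : ℝ) : ℂ) • phiT ρ V T₂ a) ∧
    -- in particular, for `T ∈ ρ(A)′` with `0 ≤ T ≤ 1`:
    (∀ T ∈ commutantSet (Set.range ρ), IsPosOp T → IsPosOp (1 - T) →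
      ((∀ (g : G) (a : A), phiT ρ V T (τ g a) = phiT ρ V T a) ↔
        ∀ g : G, T * U g = U g * T)) := by
  have hu g := (hU g).1
  simp only [mem_commutantSet_range_union, mem_commutantSet_range]
  refine ⟨?_, ?_, ?_, ?_, ?_, ?_⟩
  · rintro T ⟨hTρ, hTU⟩ hT h1T
    refine ⟨isCPMap_phiT hmin hTρ hT, ?_, fun g =>
      phiT_map_eq_of_commute (hu g) (hUV g) (hUρ g) (hTU g).symm⟩
    rw [← hmin.phiT_one, ← phiT_sub]
    exact isCPMap_phiT hmin (fun a => (Commute.one_right _).sub_right (hTρ a)) h1T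
  · rintro T₁ ⟨h₁, -⟩ T₂ ⟨h₂, -⟩ - - - - heq
    exact (isRadonNikodymDeriv_phiT hmin h₁).unique hmin (heq ▸ isRadonNikodymDeriv_phiT hmin h₂)
  · intro θ hθ hφθ hθτ
    obtain ⟨T, hT⟩ := exists_isRadonNikodymDeriv hmin hθ hφθ
    exact ⟨T, ⟨hT.commute hmin, fun g => hT.commute_of_map_eq hmin (hu g) (hUV g) (hUρ g) (hθτ g)⟩,
      hT.isPosOp hmin hθ.isNonneg_stinespringForm,
      (hmin.isRadonNikodymDeriv_one.sub hT).isPosOp hmin hφθ.isNonneg_stinespringForm,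
      hT.eq_phiT hmin⟩
  · rintro T₁ ⟨h₁, -⟩ T₂ ⟨h₂, -⟩ - - - -
    have h₂₁ a : Commute (ρ a) (T₂ - T₁) := (h₂ a).sub_right (h₁ a)
    rw [← phiT_sub]
    exact ⟨isCPMap_phiT hmin h₂₁, fun h =>
      (isRadonNikodymDeriv_phiT hmin h₂₁).isPosOp hmin h.isNonneg_stinespringForm⟩
  · rintro T₁ T₂ t - -
    ext a h
    simp [phiT]
  · rintro T hTρ - -
    exact ⟨fun hinv g => ((isRadonNikodymDeriv_phiT hmin hTρ).commute_of_map_eq hmin (hu g)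
      (hUV g) (hUρ g) (hinv g)).symm,
      fun hTU g => phiT_map_eq_of_commute (hu g) (hUV g) (hUρ g) (hTU g)⟩

theorem radon_nikodym_G_invariant_stinespring
    (A : Type) [CStarAlgebra A] [TopologicalSpace.SeparableSpace A]
    (H : Type) [NormedAddCommGroup H] [InnerProductSpace ℂ H] [CompleteSpace H]
    [TopologicalSpace.SeparableSpace H]
    (G : Type) [Group G] (τ : G → A ≃⋆ₐ[ℂ] A)
    (hτ : ∀ (g₁ g₂ : G) (a : A), τ (g₁ * g₂) a = τ g₁ (τ g₂ a))
    (φ : A → (H →L[ℂ] H)) (hφ : IsUCPMap A H φ)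
    (hφinv : ∀ (g : G) (a : A), φ (τ g a) = φ a)
    (K : Type) [NormedAddCommGroup K] [InnerProductSpace ℂ K] [CompleteSpace K]
    (ρ : A → (K →L[ℂ] K)) (V : H →L[ℂ] K)
    (hmin : IsMinStinespring A H K φ ρ V)
    (U : G → (K →L[ℂ] K))
    (hU : ∀ g, star (U g) * U g = 1 ∧ U g * star (U g) = 1)
    (hUmul : ∀ g₁ g₂, U (g₁ * g₂) = U g₁ * U g₂)
    (hUV : ∀ (g : G) (h : H), (U g) (V h) = V h)
    (hUρ : ∀ (g : G) (a : A), U g * ρ a * star (U g) = ρ (τ g a)) :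
    -- the map `T ↦ φ_T` sends the operator interval into `[0, φ] ∩ CP_G`:
    (∀ T ∈ commutantSet (Set.range ρ ∪ Set.range U), IsPosOp T → IsPosOp (1 - T) →
      IsCPMap A H (phiT ρ V T) ∧ IsCPMap A H (fun a => φ a - phiT ρ V T a) ∧
        ∀ (g : G) (a : A), phiT ρ V T (τ g a) = phiT ρ V T a) ∧
    -- injectivity:
    (∀ T₁ ∈ commutantSet (Set.range ρ ∪ Set.range U),
      ∀ T₂ ∈ commutantSet (Set.range ρ ∪ Set.range U),
      IsPosOp T₁ → IsPosOp (1 - T₁) → IsPosOp T₂ → IsPosOp (1 - T₂) →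
      phiT ρ V T₁ = phiT ρ V T₂ → T₁ = T₂) ∧
    -- surjectivity onto `[0, φ] ∩ CP_G`:
    (∀ θ : A → (H →L[ℂ] H), IsCPMap A H θ → IsCPMap A H (fun a => φ a - θ a) →
      (∀ (g : G) (a : A), θ (τ g a) = θ a) →
      ∃ T ∈ commutantSet (Set.range ρ ∪ Set.range U),
        IsPosOp T ∧ IsPosOp (1 - T) ∧ θ = phiT ρ V T) ∧
    -- order isomorphism:
    (∀ T₁ ∈ commutantSet (Set.range ρ ∪ Set.range U),
      ∀ T₂ ∈ commutantSet (Set.range ρ ∪ Set.range U),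
      IsPosOp T₁ → IsPosOp (1 - T₁) → IsPosOp T₂ → IsPosOp (1 - T₂) →
      (IsPosOp (T₂ - T₁) ↔ IsCPMap A H (fun a => phiT ρ V T₂ a - phiT ρ V T₁ a))) ∧
    -- affineness:
    (∀ T₁ T₂ : K →L[ℂ] K, ∀ t : ℝ, 0 ≤ t → t ≤ 1 →
      phiT ρ V ((t : ℂ) • T₁ + ((1 - t : ℝ) : ℂ) • T₂) =
        fun a => (t : ℂ) • phiT ρ V T₁ a + ((1 - t : ℝ) : ℂ) • phiT ρ V T₂ a) ∧
    -- in particular, for `T ∈ ρ(A)′` with `0 ≤ T ≤ 1`: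
    (∀ T ∈ commutantSet (Set.range ρ), IsPosOp T → IsPosOp (1 - T) →
      ((∀ (g : G) (a : A), phiT ρ V T (τ g a) = phiT ρ V T a) ↔
        ∀ g : G, T * U g = U g * T)) :=
  radon_nikodym_G_invariant_stinespring_general A H G τ φ K ρ V hmin U hU hUV hUρ
end
end
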